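/- arXiv:2605.07795 — 4 statements merged into one kernel-verified Lean document; each statement's English description precedes it below -/
import Mathlib

section
/- Let f : ℝ^d → ℝ be twice continuously differentiable and L-smooth, and let D be a constant such that for all n ≥ 1 and all z₁, ..., zₙ ∈ ℝ^d, ‖∇²f(z₁) - (1/n) ∑ⱼ ∇²f(zⱼ)‖ ≤ D (operator norm). Then the Functional (L_A, L_B) Inequality holds with L_A = √2 · D and L_B = √2 · L: for all n ≥ 1, x, u₁, ..., uₙ, ‖(1/n) ∑ᵢ (∇f(x+uᵢ) - ∇f(x))‖² ≤ 2D² (1/n) ∑ᵢ ‖uᵢ‖² + 2L² ‖(1/n) ∑ᵢ uᵢ‖². -/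
/-!
Put `φ t = (1/n) ∑ᵢ ∇f(x + t uᵢ)`. By the mean value inequality, `‖φ 1 - φ 0‖` is bounded by
`sup_t ‖φ' t‖`, where `φ' t = (1/n) ∑ᵢ Hᵢ uᵢ` with `Hᵢ = ∇²f(x + t uᵢ)`. Writing `M` and `ū` for
the averages of the `Hᵢ` and of the `uᵢ`, we have `φ' t = (1/n) ∑ᵢ (Hᵢ - M) uᵢ + M ū`, and
`‖Hᵢ - M‖ ≤ D`, `‖M‖ ≤ L` give `‖φ' t‖ ≤ D · (1/n) ∑ᵢ ‖uᵢ‖ + L ‖ū‖`. Squaring with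
`(a + b)² ≤ 2a² + 2b²` and `((1/n) ∑ᵢ ‖uᵢ‖)² ≤ (1/n) ∑ᵢ ‖uᵢ‖²` finishes the proof.
-/

open scoped BigOperators
open Set Finset

theorem ContDiff.differentiable_gradient {F : Type*} [NormedAddCommGroup F]
    [InnerProductSpace ℝ F] [CompleteSpace F] {f : F → ℝ} (hf : ContDiff ℝ 2 f) :
    Differentiable ℝ (gradient f) := by
  have hgrad : gradient f = (InnerProductSpace.toDual ℝ F).symm ∘ fderiv ℝ f := rfl
  rw [hgrad]
  exact (InnerProductSpace.toDual ℝ F).symm.differentiable.comp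
    ((hf.fderiv_right le_rfl).differentiable one_ne_zero)

theorem norm_sub_average_le_of_forall_first {ι E : Type*} [SeminormedAddCommGroup E]
    [Module ℝ E] (F : ι → E) {D : ℝ}
    (h : ∀ (n : ℕ) (hn : 1 ≤ n) (z : Fin n → ι),
      ‖F (z ⟨0, hn⟩) - (n : ℝ)⁻¹ • ∑ j, F (z j)‖ ≤ D)
    {n : ℕ} (z : Fin n → ι) (i : Fin n) :
    ‖F (z i) - (n : ℝ)⁻¹ • ∑ j, F (z j)‖ ≤ D := by
  have hn : 1 ≤ n := i.pos
  have key := h n hn fun j => z (Equiv.swap ⟨0, hn⟩ i j)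
  rwa [Equiv.swap_apply_left,
    Equiv.sum_comp (Equiv.swap ⟨0, hn⟩ i) (fun j => F (z j))] at key

theorem norm_average_le {E : Type*} [SeminormedAddCommGroup E] [NormedSpace ℝ E]
    {n : ℕ} {v : Fin n → E} {L : ℝ} (hL : 0 ≤ L) (hv : ∀ i, ‖v i‖ ≤ L) :
    ‖(n : ℝ)⁻¹ • ∑ i, v i‖ ≤ L := by
  rcases Nat.eq_zero_or_pos n with rfl | hn
  · simpa using hL
  calc ‖(n : ℝ)⁻¹ • ∑ i, v i‖ ≤ (n : ℝ)⁻¹ * ∑ _i : Fin n, L := by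
        rw [norm_smul, norm_inv, Real.norm_natCast]
        gcongr
        exact (norm_sum_le _ _).trans (Finset.sum_le_sum fun i _ => hv i)
    _ = L := by
        rw [Finset.sum_const, Finset.card_univ, Fintype.card_fin, nsmul_eq_mul]
        field_simp

theorem norm_smul_sum_apply_le {ι E F : Type*} [Fintype ι] [SeminormedAddCommGroup E]
    [NormedSpace ℝ E] [SeminormedAddCommGroup F] [NormedSpace ℝ F]
    {H : ι → E →L[ℝ] F} {u : ι → E} {c D L : ℝ} (hc : 0 ≤ c)
    (hdev : ∀ i, ‖H i - c • ∑ j, H j‖ ≤ D) (hmean : ‖c • ∑ j, H j‖ ≤ L) :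
    ‖c • ∑ i, H i (u i)‖ ≤ D * (c * ∑ i, ‖u i‖) + L * ‖c • ∑ i, u i‖ := by
  set M := c • ∑ j, H j
  have hsplit : c • ∑ i, H i (u i) = c • ∑ i, (H i - M) (u i) + M (c • ∑ i, u i) := by
    simp only [sub_apply, Finset.sum_sub_distrib, smul_sub, map_smul,
      map_sum]
    abel
  have hdev_apply : ‖∑ i, (H i - M) (u i)‖ ≤ ∑ i, D * ‖u i‖ :=
    (norm_sum_le _ _).trans <| Finset.sum_le_sum fun i _ =>
      ((H i - M).le_opNorm (u i)).trans (by gcongr; exact hdev i)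
  calc ‖c • ∑ i, H i (u i)‖
      ≤ ‖c • ∑ i, (H i - M) (u i)‖ + ‖M (c • ∑ i, u i)‖ := hsplit ▸ norm_add_le _ _
    _ ≤ c * ∑ i, D * ‖u i‖ + L * ‖c • ∑ i, u i‖ := by
        rw [norm_smul, Real.norm_of_nonneg hc]
        gcongr
        exact (M.le_opNorm _).trans (by gcongr)
    _ = D * (c * ∑ i, ‖u i‖) + L * ‖c • ∑ i, u i‖ := by
        rw [← Finset.mul_sum]
        ring

theorem norm_smul_sum_sub_le_of_norm_smul_sum_fderiv_le {ι E F : Type*} [Fintype ι]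
    [NormedAddCommGroup E] [NormedSpace ℝ E] [NormedAddCommGroup F] [NormedSpace ℝ F]
    {g : E → F} (hg : Differentiable ℝ g) (c C : ℝ) (x : E) (u : ι → E)
    (hbound : ∀ t ∈ Ico (0 : ℝ) 1, ‖c • ∑ i, fderiv ℝ g (x + t • u i) (u i)‖ ≤ C) :
    ‖c • ∑ i, (g (x + u i) - g x)‖ ≤ C := by
  have hderiv (t : ℝ) : HasDerivAt (fun s : ℝ => c • ∑ i, g (x + s • u i))
      (c • ∑ i, fderiv ℝ g (x + t • u i) (u i)) t := by
    refine (HasDerivAt.fun_sum fun i _ => ?_).const_smul c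
    have hline : HasDerivAt (fun s : ℝ => x + s • u i) (u i) t := by
      simpa using ((hasDerivAt_id t).smul_const (u i)).const_add x
    exact (hg _).hasFDerivAt.comp_hasDerivAt t hline
  simpa [Finset.sum_sub_distrib, smul_sub] using
    norm_image_sub_le_of_norm_deriv_le_segment_01'
      (fun t _ => (hderiv t).hasDerivWithinAt) hbound

theorem sq_average_le_average_sq {n : ℕ} (a : Fin n → ℝ) :
    ((n : ℝ)⁻¹ * ∑ i, a i) ^ 2 ≤ (n : ℝ)⁻¹ * ∑ i, a i ^ 2 := by
  simpa [inv_mul_eq_div] using sum_div_card_sq_le_sum_sq_div_card (s := univ) (f := a)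

theorem stmt3_general (d : ℕ) (f : EuclideanSpace ℝ (Fin d) → ℝ) (L D : ℝ)
    (hL : 0 ≤ L)
    (hC2 : ContDiff ℝ 2 f)
    (hsmooth : ∀ x y : EuclideanSpace ℝ (Fin d),
      ‖gradient f x - gradient f y‖ ≤ L * ‖x - y‖)
    (hHess : ∀ (n : ℕ) (hn : 1 ≤ n) (z : Fin n → EuclideanSpace ℝ (Fin d)),
      ‖fderiv ℝ (gradient f) (z ⟨0, hn⟩)
        - (n : ℝ)⁻¹ • ∑ j, fderiv ℝ (gradient f) (z j)‖ ≤ D) :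
    ∀ (n : ℕ), 1 ≤ n → ∀ (x : EuclideanSpace ℝ (Fin d))
      (u : Fin n → EuclideanSpace ℝ (Fin d)),
      ‖(n : ℝ)⁻¹ • ∑ i, (gradient f (x + u i) - gradient f x)‖ ^ 2
        ≤ 2 * D ^ 2 * ((n : ℝ)⁻¹ * ∑ i, ‖u i‖ ^ 2)
          + 2 * L ^ 2 * ‖(n : ℝ)⁻¹ • ∑ i, u i‖ ^ 2 := by
  intro n _ x u
  have hHessL (z) : ‖fderiv ℝ (gradient f) z‖ ≤ L :=
    norm_fderiv_le_of_lip' ℝ hL (.of_forall fun y => hsmooth y z)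
  have hmvt := norm_smul_sum_sub_le_of_norm_smul_sum_fderiv_le hC2.differentiable_gradient
    (n : ℝ)⁻¹ _ x u fun t _ => norm_smul_sum_apply_le (by positivity)
      (norm_sub_average_le_of_forall_first _ hHess _)
      (norm_average_le hL fun j => hHessL (x + t • u j))
  calc ‖(n : ℝ)⁻¹ • ∑ i, (gradient f (x + u i) - gradient f x)‖ ^ 2
      ≤ (D * ((n : ℝ)⁻¹ * ∑ i, ‖u i‖) + L * ‖(n : ℝ)⁻¹ • ∑ i, u i‖) ^ 2 := by
        gcongr
    _ ≤ 2 * (D ^ 2 * ((n : ℝ)⁻¹ * ∑ i, ‖u i‖) ^ 2 + L ^ 2 * ‖(n : ℝ)⁻¹ • ∑ i, u i‖ ^ 2) := by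
        exact add_sq_le.trans_eq (by ring)
    _ ≤ 2 * D ^ 2 * ((n : ℝ)⁻¹ * ∑ i, ‖u i‖ ^ 2)
          + 2 * L ^ 2 * ‖(n : ℝ)⁻¹ • ∑ i, u i‖ ^ 2 := by
        nlinarith [sq_average_le_average_sq fun i => ‖u i‖, sq_nonneg D]

theorem stmt3 (d : ℕ) (f : EuclideanSpace ℝ (Fin d) → ℝ) (L D : ℝ)
    (hL : 0 ≤ L) (hD : 0 ≤ D)
    (hC2 : ContDiff ℝ 2 f)
    (hsmooth : ∀ x y : EuclideanSpace ℝ (Fin d),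
      ‖gradient f x - gradient f y‖ ≤ L * ‖x - y‖)
    (hHess : ∀ (n : ℕ) (hn : 1 ≤ n) (z : Fin n → EuclideanSpace ℝ (Fin d)),
      ‖fderiv ℝ (gradient f) (z ⟨0, hn⟩)
        - (n : ℝ)⁻¹ • ∑ j, fderiv ℝ (gradient f) (z j)‖ ≤ D) :
    ∀ (n : ℕ), 1 ≤ n → ∀ (x : EuclideanSpace ℝ (Fin d))
      (u : Fin n → EuclideanSpace ℝ (Fin d)),
      ‖(n : ℝ)⁻¹ • ∑ i, (gradient f (x + u i) - gradient f x)‖ ^ 2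
        ≤ 2 * D ^ 2 * ((n : ℝ)⁻¹ * ∑ i, ‖u i‖ ^ 2)
          + 2 * L ^ 2 * ‖(n : ℝ)⁻¹ • ∑ i, u i‖ ^ 2 :=
  stmt3_general d f L D hL hC2 hsmooth hHess
end

section
/- Let f(x) = (1/2) xᵀ H x + ⟨b, x⟩ + c + g(x), where H is a symmetric d×d matrix, b ∈ ℝ^d, c ∈ ℝ, and g : ℝ^d → ℝ is differentiable and L_small-smooth. Then f satisfies the Functional (L_A, L_B) Inequality with L_A = 2√2 · L_small and L_B = √2 (‖H‖ + L_small): for all n ≥ 1, x, u₁, ..., uₙ, ‖(1/n) ∑ᵢ (∇f(x+uᵢ) - ∇f(x))‖² ≤ 8 L_small² (1/n) ∑ᵢ ‖uᵢ‖² + 2(‖H‖ + L_small)² ‖(1/n) ∑ᵢ uᵢ‖². -/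
open scoped BigOperators RealInnerProductSpace

/-!
Since `H` is symmetric, `∇f(y) = H y + b + ∇g(y)`, so the averaged gradient increment splits as
`H m + v`, where `m` is the mean of the `uᵢ` and `v` the mean of the increments of `∇g`. The first
term is at most `‖H‖ ‖m‖`; by the Lipschitz bound and Jensen's inequality, `‖v‖²` is at most
`L_small²` times the mean of the `‖uᵢ‖²`. The inequality `‖a + b‖² ≤ 2 ‖a‖² + 2 ‖b‖²` combines them.
-/

open Finset InnerProductSpace

section Gradient

variable {𝕜 F : Type*} [RCLike 𝕜] [NormedAddCommGroup F] [InnerProductSpace 𝕜 F] [CompleteSpace F]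
  {f g : F → 𝕜} {f' g' x : F}

theorem HasGradientAt.add (hf : HasGradientAt f f' x) (hg : HasGradientAt g g' x) :
    HasGradientAt (fun y => f y + g y) (f' + g') x := by
  rw [hasGradientAt_iff_hasFDerivAt, map_add]
  exact hf.hasFDerivAt.add hg.hasFDerivAt

theorem HasGradientAt.add_const (hf : HasGradientAt f f' x) (c : 𝕜) :
    HasGradientAt (fun y => f y + c) f' x :=
  hasGradientAt_iff_hasFDerivAt.mpr (hf.hasFDerivAt.add_const c)

theorem hasGradientAt_inner_left (b x : F) : HasGradientAt (fun y => inner 𝕜 b y) b x :=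
  hasGradientAt_iff_hasFDerivAt.mpr (innerSL 𝕜 b).hasFDerivAt

end Gradient

theorem LinearMap.IsSymmetric.hasGradientAt_half_inner_self {E : Type*} [NormedAddCommGroup E]
    [InnerProductSpace ℝ E] [CompleteSpace E] {T : E →L[ℝ] E}
    (hT : (T : E →ₗ[ℝ] E).IsSymmetric) (x : E) :
    HasGradientAt (fun y => (1 / 2) * ⟪y, T y⟫) (T x) x := by
  rw [hasGradientAt_iff_hasFDerivAt]
  refine (((hasFDerivAt_id x).inner ℝ T.hasFDerivAt).const_mul (1 / 2)).congr_fderiv ?_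
  ext h
  simp only [one_div, id_eq, _root_.smul_apply, ContinuousLinearMap.comp_apply,
    ContinuousLinearMap.prod_apply, ContinuousLinearMap.id_apply, fderivInnerCLM_apply,
    smul_eq_mul, toDual_apply_apply, real_inner_comm (T x) h]
  have hTxh : ⟪T x, h⟫ = ⟪x, T h⟫ := hT x h
  rw [hTxh]
  ring

theorem LinearMap.IsSymmetric.hasGradientAt_quadratic_add {E : Type*} [NormedAddCommGroup E]
    [InnerProductSpace ℝ E] [CompleteSpace E] {T : E →L[ℝ] E}
    (hT : (T : E →ₗ[ℝ] E).IsSymmetric) (b : E) (c : ℝ) {g : E → ℝ} {x : E}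
    (hg : DifferentiableAt ℝ g x) :
    HasGradientAt (fun y => (1 / 2) * ⟪y, T y⟫ + ⟪b, y⟫ + c + g y) (T x + b + gradient g x) x :=
  (((hT.hasGradientAt_half_inner_self x).add (hasGradientAt_inner_left b x)).add_const c).add
    hg.hasGradientAt

theorem norm_add_sq_le_two_mul {G : Type*} [SeminormedAddGroup G] (a b : G) :
    ‖a + b‖ ^ 2 ≤ 2 * (‖a‖ ^ 2 + ‖b‖ ^ 2) :=
  (pow_le_pow_left₀ (norm_nonneg _) (norm_add_le a b) 2).trans add_sq_le

theorem sq_norm_avg_sub_le_of_lipschitz {ι E F : Type*} [SeminormedAddCommGroup E]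
    [SeminormedAddCommGroup F] [NormedSpace ℝ F] {G : E → F} {L : ℝ} (hG : ∀ x y, ‖G x - G y‖ ≤ L * ‖x - y‖)
    (s : Finset ι) (x : E) (u : ι → E) :
    ‖(#s : ℝ)⁻¹ • ∑ i ∈ s, (G (x + u i) - G x)‖ ^ 2
      ≤ L ^ 2 * ((#s : ℝ)⁻¹ * ∑ i ∈ s, ‖u i‖ ^ 2) := by
  have hnorm : ‖(#s : ℝ)⁻¹ • ∑ i ∈ s, (G (x + u i) - G x)‖ ≤ L * ((∑ i ∈ s, ‖u i‖) / #s) :=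
    calc ‖(#s : ℝ)⁻¹ • ∑ i ∈ s, (G (x + u i) - G x)‖
        ≤ (#s : ℝ)⁻¹ * ∑ i ∈ s, ‖G (x + u i) - G x‖ := by
          rw [norm_smul, norm_inv, Real.norm_natCast]
          gcongr
          exact norm_sum_le _ _
      _ ≤ (#s : ℝ)⁻¹ * ∑ i ∈ s, L * ‖u i‖ := by
          gcongr with i
          simpa using hG (x + u i) x
      _ = L * ((∑ i ∈ s, ‖u i‖) / #s) := by
          rw [← mul_sum]; ring
  calc ‖(#s : ℝ)⁻¹ • ∑ i ∈ s, (G (x + u i) - G x)‖ ^ 2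
      ≤ (L * ((∑ i ∈ s, ‖u i‖) / #s)) ^ 2 := pow_le_pow_left₀ (norm_nonneg _) hnorm 2
    _ = L ^ 2 * ((∑ i ∈ s, ‖u i‖) / #s) ^ 2 := mul_pow _ _ _
    _ ≤ L ^ 2 * ((∑ i ∈ s, ‖u i‖ ^ 2) / #s) := by
        gcongr; exact sum_div_card_sq_le_sum_sq_div_card
    _ = L ^ 2 * ((#s : ℝ)⁻¹ * ∑ i ∈ s, ‖u i‖ ^ 2) := by rw [inv_mul_eq_div]

theorem stmt5 (d : ℕ) (H : Matrix (Fin d) (Fin d) ℝ) (hH : H.IsSymm)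
    (b : EuclideanSpace ℝ (Fin d)) (c : ℝ)
    (g : EuclideanSpace ℝ (Fin d) → ℝ) (Lsmall : ℝ) (hLs : 0 ≤ Lsmall)
    (hgdiff : Differentiable ℝ g)
    (hgsmooth : ∀ x y : EuclideanSpace ℝ (Fin d),
      ‖gradient g x - gradient g y‖ ≤ Lsmall * ‖x - y‖)
    (f : EuclideanSpace ℝ (Fin d) → ℝ)
    (hf : ∀ x : EuclideanSpace ℝ (Fin d),
      f x = (1 / 2) * ⟪x, (Matrix.toEuclideanCLM (𝕜 := ℝ) H) x⟫ + ⟪b, x⟫ + c + g x) :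
    ∀ (n : ℕ), 1 ≤ n → ∀ (x : EuclideanSpace ℝ (Fin d))
      (u : Fin n → EuclideanSpace ℝ (Fin d)),
      ‖(n : ℝ)⁻¹ • ∑ i, (gradient f (x + u i) - gradient f x)‖ ^ 2
        ≤ 8 * Lsmall ^ 2 * ((n : ℝ)⁻¹ * ∑ i, ‖u i‖ ^ 2)
          + 2 * (‖(Matrix.toEuclideanCLM (𝕜 := ℝ) H :
              EuclideanSpace ℝ (Fin d) →L[ℝ] EuclideanSpace ℝ (Fin d))‖ + Lsmall) ^ 2
            * ‖(n : ℝ)⁻¹ • ∑ i, u i‖ ^ 2 := by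
  intro n _ x u
  set A : EuclideanSpace ℝ (Fin d) →L[ℝ] EuclideanSpace ℝ (Fin d) :=
    Matrix.toEuclideanCLM (𝕜 := ℝ) H
  have hA : (A : EuclideanSpace ℝ (Fin d) →ₗ[ℝ] EuclideanSpace ℝ (Fin d)).IsSymmetric :=
    Matrix.isSymmetric_toEuclideanLin_iff.mpr (Matrix.isHermitian_iff_isSymm.mpr hH)
  have hgrad : ∀ y, gradient f y = A y + b + gradient g y := fun y => by
    rw [funext hf]
    exact (hA.hasGradientAt_quadratic_add b c (hgdiff y)).gradient
  set m := (n : ℝ)⁻¹ • ∑ i, u i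
  set v := (n : ℝ)⁻¹ • ∑ i, (gradient g (x + u i) - gradient g x)
  have hsplit : (n : ℝ)⁻¹ • ∑ i, (gradient f (x + u i) - gradient f x) = A m + v := by
    simp only [m, v, hgrad, map_smul, map_sum, map_add, ← smul_add, ← sum_add_distrib]
    congr 1; refine sum_congr rfl fun i _ => ?_; abel
  have hv : ‖v‖ ^ 2 ≤ Lsmall ^ 2 * ((n : ℝ)⁻¹ * ∑ i, ‖u i‖ ^ 2) := by
    have := sq_norm_avg_sub_le_of_lipschitz hgsmooth univ x u
    rwa [card_univ, Fintype.card_fin] at this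
  rw [hsplit]
  calc ‖A m + v‖ ^ 2 ≤ 2 * (‖A m‖ ^ 2 + ‖v‖ ^ 2) := norm_add_sq_le_two_mul _ _
    _ ≤ 2 * ((‖A‖ * ‖m‖) ^ 2 + Lsmall ^ 2 * ((n : ℝ)⁻¹ * ∑ i, ‖u i‖ ^ 2)) := by
        gcongr; exact A.le_opNorm m
    _ ≤ _ := by
        have hnormA : ‖A‖ ^ 2 ≤ (‖A‖ + Lsmall) ^ 2 := by gcongr; linarith
        have hmean : 0 ≤ (n : ℝ)⁻¹ * ∑ i, ‖u i‖ ^ 2 := by positivity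
        linarith [mul_le_mul_of_nonneg_right hnormA (sq_nonneg ‖m‖),
          mul_nonneg (sq_nonneg Lsmall) hmean]
end

section
/- A function f satisfies the Functional (L_A, L_B) Inequality with uniform weights for all n if and only if it satisfies the weighted version: for all n ≥ 1, x, u₁, ..., uₙ ∈ ℝ^d, and all nonnegative weights β₁, ..., βₙ summing to 1, ‖∑ᵢ βᵢ(∇f(x+uᵢ) - ∇f(x))‖² ≤ L_A² ∑ᵢ βᵢ ‖uᵢ‖² + L_B² ‖∑ᵢ βᵢ uᵢ‖². -/
/-!
Uniform weights on the family in which `u i` is repeated `k i` times are the weights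
`k i / ∑ j, k j` on the original family, so the uniform inequality yields the weighted one at
every rational point of the simplex. The weighted inequality is a closed condition on `β`, and
`⌈β i * N⌉₊ / ∑ j, ⌈β j * N⌉₊ → β i`.
-/

open Filter Topology

section

variable {E F : Type*} [SeminormedAddCommGroup E] [NormedSpace ℝ E]
  [SeminormedAddCommGroup F] [NormedSpace ℝ F]

def FunctionalIneq (g : E → F) (LA LB : ℝ) {ι : Type*} [Fintype ι] (u : ι → E) (β : ι → ℝ) :
    Prop :=
  ‖∑ i, β i • g (u i)‖ ^ 2 ≤ LA ^ 2 * (∑ i, β i * ‖u i‖ ^ 2) + LB ^ 2 * ‖∑ i, β i • u i‖ ^ 2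

variable {g : E → F} {LA LB : ℝ}

theorem functionalIneq_const_iff {ι : Type*} [Fintype ι] (u : ι → E) (c : ℝ) :
    FunctionalIneq g LA LB u (fun _ => c) ↔
      ‖c • ∑ i, g (u i)‖ ^ 2 ≤ LA ^ 2 * (c * ∑ i, ‖u i‖ ^ 2) + LB ^ 2 * ‖c • ∑ i, u i‖ ^ 2 := by
  simp only [FunctionalIneq, Finset.smul_sum, Finset.mul_sum]

theorem isClosed_setOf_functionalIneq {ι : Type*} [Fintype ι] (u : ι → E) :
    IsClosed {β : ι → ℝ | FunctionalIneq g LA LB u β} :=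
  isClosed_le (by fun_prop) (by fun_prop)

theorem Fin.sum_inv_smul_comp_finSigmaFinEquiv_symm_fst {𝕜 V : Type*} [DivisionSemiring 𝕜]
    [AddCommMonoid V] [Module 𝕜 V] {n : ℕ} (k : Fin n → ℕ) (v : Fin n → V) :
    ∑ j, ((∑ i, k i : ℕ) : 𝕜)⁻¹ • v ((finSigmaFinEquiv (n := k)).symm j).1
      = ∑ i, (k i / (∑ j, k j : ℕ) : 𝕜) • v i := by
  rw [← finSigmaFinEquiv.sum_comp]
  simp [Fintype.sum_sigma, ← Nat.cast_smul_eq_nsmul 𝕜, smul_smul, div_eq_mul_inv]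

theorem functionalIneq_natCast_div_sum
    (h : ∀ n : ℕ, 1 ≤ n → ∀ u : Fin n → E, FunctionalIneq g LA LB u (fun _ => (n : ℝ)⁻¹))
    {n : ℕ} (u : Fin n → E) (k : Fin n → ℕ) :
    FunctionalIneq g LA LB u (fun i => k i / (∑ j, k j : ℕ)) := by
  obtain hM | hM := (∑ j, k j).eq_zero_or_pos
  -- all weights are `k i / 0 = 0`
  · simp [FunctionalIneq, hM]
  have := h _ hM (fun j => u ((finSigmaFinEquiv (n := k)).symm j).1)
  simp only [FunctionalIneq, ← smul_eq_mul (a := ((∑ j, k j : ℕ) : ℝ)⁻¹)] at this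
  rw [Fin.sum_inv_smul_comp_finSigmaFinEquiv_symm_fst k (fun i => g (u i)),
    Fin.sum_inv_smul_comp_finSigmaFinEquiv_symm_fst k (fun i => ‖u i‖ ^ 2),
    Fin.sum_inv_smul_comp_finSigmaFinEquiv_symm_fst k u] at this
  simpa only [FunctionalIneq, smul_eq_mul] using this

theorem tendsto_natCeil_mul_div_sum {ι : Type*} [Fintype ι] {β : ι → ℝ} (hβ0 : ∀ i, 0 ≤ β i)
    (hβ1 : ∑ i, β i = 1) :
    Tendsto (fun N : ℕ => fun i => (⌈β i * N⌉₊ : ℝ) / (∑ j, ⌈β j * N⌉₊ : ℕ)) atTop (𝓝 β) := by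
  have hcoord (i : ι) : Tendsto (fun N : ℕ => (⌈β i * N⌉₊ : ℝ) / N) atTop (𝓝 (β i)) :=
    (tendsto_nat_ceil_mul_div_atTop (hβ0 i)).comp tendsto_natCast_atTop_atTop
  have hsum : Tendsto (fun N : ℕ => ∑ j, (⌈β j * N⌉₊ : ℝ) / N) atTop (𝓝 1) :=
    hβ1 ▸ tendsto_finsetSum _ fun j _ => hcoord j
  refine tendsto_pi_nhds.2 fun i => ?_
  refine (div_one (β i) ▸ (hcoord i).div hsum one_ne_zero).congr' ?_
  filter_upwards [eventually_ne_atTop 0] with N hN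
  rw [Pi.div_apply, ← Finset.sum_div, div_div_div_cancel_right₀ (Nat.cast_ne_zero.2 hN),
    Nat.cast_sum]

theorem functionalIneq_of_forall_uniform
    (h : ∀ n : ℕ, 1 ≤ n → ∀ u : Fin n → E, FunctionalIneq g LA LB u (fun _ => (n : ℝ)⁻¹))
    {n : ℕ} (u : Fin n → E) {β : Fin n → ℝ} (hβ0 : ∀ i, 0 ≤ β i) (hβ1 : ∑ i, β i = 1) :
    FunctionalIneq g LA LB u β :=
  (isClosed_setOf_functionalIneq u).mem_of_tendsto (tendsto_natCeil_mul_div_sum hβ0 hβ1)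
    (Eventually.of_forall fun _ => functionalIneq_natCast_div_sum h u _)

end

theorem stmt6_general (d : ℕ) (f : EuclideanSpace ℝ (Fin d) → ℝ) (LA LB : ℝ) :
    (∀ (n : ℕ), 1 ≤ n → ∀ (x : EuclideanSpace ℝ (Fin d))
        (u : Fin n → EuclideanSpace ℝ (Fin d)),
        ‖(n : ℝ)⁻¹ • ∑ i, (gradient f (x + u i) - gradient f x)‖ ^ 2
          ≤ LA ^ 2 * ((n : ℝ)⁻¹ * ∑ i, ‖u i‖ ^ 2)
            + LB ^ 2 * ‖(n : ℝ)⁻¹ • ∑ i, u i‖ ^ 2)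
    ↔ (∀ (n : ℕ), 1 ≤ n → ∀ (x : EuclideanSpace ℝ (Fin d))
        (u : Fin n → EuclideanSpace ℝ (Fin d)) (β : Fin n → ℝ),
        (∀ i, 0 ≤ β i) → (∑ i, β i = 1) →
        ‖∑ i, β i • (gradient f (x + u i) - gradient f x)‖ ^ 2
          ≤ LA ^ 2 * (∑ i, β i * ‖u i‖ ^ 2)
            + LB ^ 2 * ‖∑ i, β i • u i‖ ^ 2) := by
  constructor
  · intro h n _ x u β hβ0 hβ1
    exact functionalIneq_of_forall_uniform
      (g := fun v => gradient f (x + v) - gradient f x)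
      (fun m hm u => (functionalIneq_const_iff u _).2 (h m hm x u)) u hβ0 hβ1
  · intro h n hn x u
    refine (functionalIneq_const_iff (g := fun v => gradient f (x + v) - gradient f x) u _).1
      (h n hn x u _ (fun _ => by positivity) ?_)
    rw [Fin.sum_const, nsmul_eq_mul, mul_inv_cancel₀ (Nat.cast_ne_zero.2 (by omega))]

theorem stmt6 (d : ℕ) (f : EuclideanSpace ℝ (Fin d) → ℝ) (LA LB : ℝ)
    (hdiff : Differentiable ℝ f) :
    (∀ (n : ℕ), 1 ≤ n → ∀ (x : EuclideanSpace ℝ (Fin d))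
        (u : Fin n → EuclideanSpace ℝ (Fin d)),
        ‖(n : ℝ)⁻¹ • ∑ i, (gradient f (x + u i) - gradient f x)‖ ^ 2
          ≤ LA ^ 2 * ((n : ℝ)⁻¹ * ∑ i, ‖u i‖ ^ 2)
            + LB ^ 2 * ‖(n : ℝ)⁻¹ • ∑ i, u i‖ ^ 2)
    ↔ (∀ (n : ℕ), 1 ≤ n → ∀ (x : EuclideanSpace ℝ (Fin d))
        (u : Fin n → EuclideanSpace ℝ (Fin d)) (β : Fin n → ℝ),
        (∀ i, 0 ≤ β i) → (∑ i, β i = 1) →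
        ‖∑ i, β i • (gradient f (x + u i) - gradient f x)‖ ^ 2
          ≤ LA ^ 2 * (∑ i, β i * ‖u i‖ ^ 2)
            + LB ^ 2 * ‖∑ i, β i • u i‖ ^ 2) :=
  stmt6_general d f LA LB
end

section
/- Let a, b, c > 0 and g(x) = a x³ + b x² + c x - 1. Then g has a unique positive root x₀, and x₀ lies in the interval [x̄/2, x̄] where x̄ = 1/max{a^{1/3}, √b, c}. -/
theorem stmt11 (a b c : ℝ) (ha : 0 < a) (hb : 0 < b) (hc : 0 < c)
    (xbar : ℝ) (hxbar : xbar = 1 / max (max (a ^ ((1 : ℝ) / 3)) (Real.sqrt b)) c) :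
    ∃ x₀ : ℝ, 0 < x₀ ∧ a * x₀ ^ 3 + b * x₀ ^ 2 + c * x₀ - 1 = 0 ∧
      xbar / 2 ≤ x₀ ∧ x₀ ≤ xbar ∧
      ∀ y : ℝ, 0 < y → a * y ^ 3 + b * y ^ 2 + c * y - 1 = 0 → y = x₀ := by
  set M := max (max (a ^ ((1 : ℝ) / 3)) (Real.sqrt b)) c with hM
  have hMc : c ≤ M := le_max_right _ _
  have hM0 : 0 < M := lt_of_lt_of_le hc hMc
  have ha3 : (a ^ ((1 : ℝ) / 3)) ^ (3 : ℕ) = a := by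
    rw [← Real.rpow_natCast (a ^ ((1 : ℝ) / 3)) 3, ← Real.rpow_mul ha.le]
    norm_num
  have haM : a ≤ M ^ 3 := by
    calc a = (a ^ ((1 : ℝ) / 3)) ^ 3 := ha3.symm
    _ ≤ M ^ 3 := by
      apply pow_le_pow_left₀ (Real.rpow_nonneg ha.le _)
      exact le_trans (le_max_left _ _) (le_max_left _ _)
  have hsb : Real.sqrt b ≤ M := le_trans (le_max_right _ _) (le_max_left _ _)
  have hbM : b ≤ M ^ 2 := by
    nlinarith [Real.sq_sqrt hb.le, Real.sqrt_nonneg b]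
  have hx0 : 0 < xbar := by rw [hxbar]; positivity
  have hxM : xbar * M = 1 := by
    rw [hxbar]; field_simp
  have hsq1 : xbar ^ 2 * M ^ 2 = 1 := by rw [← mul_pow, hxM]; norm_num
  have hcube1 : xbar ^ 3 * M ^ 3 = 1 := by rw [← mul_pow, hxM]; norm_num
  have hc1 : c * xbar ≤ 1 := by nlinarith
  have hb1 : b * xbar ^ 2 ≤ 1 := by nlinarith [pow_pos hx0 2]
  have ha1 : a * xbar ^ 3 ≤ 1 := by nlinarith [pow_pos hx0 3]
  -- f xbar > 0
  have hfx : 0 < a * xbar ^ 3 + b * xbar ^ 2 + c * xbar - 1 := by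
    have h1 : M = a ^ ((1 : ℝ) / 3) ∨ M = Real.sqrt b ∨ M = c := by
      rcases max_choice (max (a ^ ((1 : ℝ) / 3)) (Real.sqrt b)) c with h | h
      · rcases max_choice (a ^ ((1 : ℝ) / 3)) (Real.sqrt b) with h2 | h2
        · left; rw [hM, h, h2]
        · right; left; rw [hM, h, h2]
      · right; right; rw [hM, h]
    rcases h1 with h | h | h
    · have haeq : a = M ^ 3 := by rw [h, ha3]
      have : a * xbar ^ 3 = 1 := by rw [haeq]; linarith [hcube1]
      nlinarith [mul_pos hb (pow_pos hx0 2), mul_pos hc hx0]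
    · have hbeq : b = M ^ 2 := by rw [h, Real.sq_sqrt hb.le]
      have : b * xbar ^ 2 = 1 := by rw [hbeq]; linarith [hsq1]
      nlinarith [mul_pos ha (pow_pos hx0 3), mul_pos hc hx0]
    · have : c * xbar = 1 := by rw [← h]; nlinarith [hxM]
      nlinarith [mul_pos ha (pow_pos hx0 3), mul_pos hb (pow_pos hx0 2)]
  have hfh : a * (xbar / 2) ^ 3 + b * (xbar / 2) ^ 2 + c * (xbar / 2) - 1 < 0 := by
    nlinarith
  have hcont : ContinuousOn (fun x => a * x ^ 3 + b * x ^ 2 + c * x - 1)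
      (Set.Icc (xbar / 2) xbar) := by fun_prop
  have hsub := intermediate_value_Icc (by linarith : xbar / 2 ≤ xbar) hcont
  have h0mem : (0 : ℝ) ∈ Set.Icc (a * (xbar / 2) ^ 3 + b * (xbar / 2) ^ 2 + c * (xbar / 2) - 1)
      (a * xbar ^ 3 + b * xbar ^ 2 + c * xbar - 1) := ⟨hfh.le, hfx.le⟩
  obtain ⟨x₀, hx₀mem, hx₀⟩ := hsub h0mem
  simp only at hx₀
  have hx₀pos : 0 < x₀ := by have := hx₀mem.1; linarith
  refine ⟨x₀, hx₀pos, hx₀, hx₀mem.1, hx₀mem.2, ?_⟩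
  intro y hy hfy
  have key : (y - x₀) * (a * (y ^ 2 + y * x₀ + x₀ ^ 2) + b * (y + x₀) + c) = 0 := by
    linear_combination hfy - hx₀
  have h1 : 0 < y ^ 2 + y * x₀ + x₀ ^ 2 :=
    add_pos (add_pos (pow_pos hy 2) (mul_pos hy hx₀pos)) (pow_pos hx₀pos 2)
  have hpos : 0 < a * (y ^ 2 + y * x₀ + x₀ ^ 2) + b * (y + x₀) + c :=
    add_pos (add_pos (mul_pos ha h1) (mul_pos hb (add_pos hy hx₀pos))) hc
  rcases mul_eq_zero.mp key with h | h
  · linear_combination h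
  · exact absurd h hpos.ne'
end
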